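/- Let C be a symmetric monoidal category and suppose (η, μ) and (η', μ') are two families assigning to each object A morphisms η_A, η'_A : 𝟙 ⟶ A and μ_A, μ'_A : A ⊗ A ⟶ A, where each family is natural (for every f : A ⟶ B, η_A ≫ f = η_B and (f ⊗ f) ≫ μ_B = μ_A ≫ f, and likewise for the primed family), satisfies the unit laws ((η_A ⊗ id_A) ≫ μ_A = λ_A and (id_A ⊗ η_A) ≫ μ_A = ρ_A, and likewise for the primed family), and is compatible with the tensor product (μ_{A⊗B} = tensorμ(A,B,A,B) ≫ (μ_A ⊗ μ_B), η_{A⊗B} = λ_𝟙⁻¹ ≫ (η_A ⊗ η_B), η_𝟙 = id_𝟙 and μ_𝟙 = λ_𝟙, and likewise for the primed family). Then the two families coincide: η_A = η'_A and μ_A = μ'_A for every object A. -/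

import Mathlib

open CategoryTheory MonoidalCategory Limits

universe v u

/-!
The unit of the second family is natural and is the identity at `𝟙_ C`, so every morphism
`𝟙_ C ⟶ A` equals `η' A`; in particular `η A = η' A`. Naturality of `μ'` along `μ A`, together
with compatibility of `μ'` with `⊗`, is an interchange law between `μ A` and `μ' A`, and the
Eckmann–Hilton argument with the common unit forces `μ A = μ' A`.
-/

theorem tensorμ_tensorUnit_tensorUnit {C : Type u} [Category.{v} C] [MonoidalCategory C]
    [BraidedCategory C] (X Y : C) : tensorμ X (𝟙_ C) (𝟙_ C) Y = 𝟙 _ := by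
  have hβ : (β_ (𝟙_ C) (𝟙_ C)).hom = 𝟙 _ := by
    simp [← unitors_equal]
  rw [tensorμ, hβ]
  monoidal

theorem eq_app_of_natural_of_app_self_eq_id {C : Type u} [Category.{v} C] {X : C}
    (η : ∀ A : C, X ⟶ A) (η_natural : ∀ {A B : C} (f : A ⟶ B), η A ≫ f = η B)
    (η_self : η X = 𝟙 X) {A : C} (f : X ⟶ A) : f = η A := by
  rw [← η_natural f, η_self, Category.id_comp]

theorem eq_of_unital_of_interchange {C : Type u} [Category.{v} C] [MonoidalCategory C]
    [BraidedCategory C] {A : C} (e : 𝟙_ C ⟶ A) (m m' : A ⊗ A ⟶ A)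
    (m_left : (e ⊗ₘ 𝟙 A) ≫ m = (λ_ A).hom) (m_right : (𝟙 A ⊗ₘ e) ≫ m = (ρ_ A).hom)
    (m'_left : (e ⊗ₘ 𝟙 A) ≫ m' = (λ_ A).hom) (m'_right : (𝟙 A ⊗ₘ e) ≫ m' = (ρ_ A).hom)
    (interchange : (m ⊗ₘ m) ≫ m' = tensorμ A A A A ≫ (m' ⊗ₘ m') ≫ m) : m = m' := by
  have h := ((𝟙 A ⊗ₘ e) ⊗ₘ (e ⊗ₘ 𝟙 A)) ≫= interchange
  rw [← Category.assoc, tensorHom_comp_tensorHom, m_right, m_left,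
    tensorμ_natural_assoc, tensorμ_tensorUnit_tensorUnit, Category.id_comp,
    ← Category.assoc, tensorHom_comp_tensorHom, m'_right, m'_left] at h
  exact ((cancel_epi _).mp h).symm

theorem central_monoid_unique_general
    {C : Type u} [Category.{v} C] [MonoidalCategory C] [SymmetricCategory C]
    (η : ∀ A : C, 𝟙_ C ⟶ A) (μ : ∀ A : C, A ⊗ A ⟶ A)
    (η' : ∀ A : C, 𝟙_ C ⟶ A) (μ' : ∀ A : C, A ⊗ A ⟶ A)
    (unit_left : ∀ A : C, (η A ⊗ₘ 𝟙 A) ≫ μ A = (λ_ A).hom)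
    (unit_right : ∀ A : C, (𝟙 A ⊗ₘ η A) ≫ μ A = (ρ_ A).hom)
    (η'_natural : ∀ {A B : C} (f : A ⟶ B), η' A ≫ f = η' B)
    (μ'_natural : ∀ {A B : C} (f : A ⟶ B), (f ⊗ₘ f) ≫ μ' B = μ' A ≫ f)
    (unit'_left : ∀ A : C, (η' A ⊗ₘ 𝟙 A) ≫ μ' A = (λ_ A).hom)
    (unit'_right : ∀ A : C, (𝟙 A ⊗ₘ η' A) ≫ μ' A = (ρ_ A).hom)
    (μ'_tensor : ∀ A B : C, μ' (A ⊗ B) = tensorμ A B A B ≫ (μ' A ⊗ₘ μ' B))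
    (η'_unit : η' (𝟙_ C) = 𝟙 (𝟙_ C)) :
    ∀ A : C, η A = η' A ∧ μ A = μ' A := by
  intro A
  have hη : η A = η' A := eq_app_of_natural_of_app_self_eq_id η' η'_natural η'_unit (η A)
  have interchange : (μ A ⊗ₘ μ A) ≫ μ' A = tensorμ A A A A ≫ (μ' A ⊗ₘ μ' A) ≫ μ A := by
    rw [μ'_natural, μ'_tensor, Category.assoc]
  refine ⟨hη, eq_of_unital_of_interchange (η A) (μ A) (μ' A) (unit_left A) (unit_right A)
    ?_ ?_ interchange⟩
  · rw [hη, unit'_left]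
  · rw [hη, unit'_right]

/-- In a symmetric monoidal category, a natural family of unital multiplications satisfying
the unit laws and compatible with the tensor product is unique: any two such families
coincide. -/
theorem central_monoid_unique
    {C : Type u} [Category.{v} C] [MonoidalCategory C] [SymmetricCategory C]
    (η : ∀ A : C, 𝟙_ C ⟶ A) (μ : ∀ A : C, A ⊗ A ⟶ A)
    (η' : ∀ A : C, 𝟙_ C ⟶ A) (μ' : ∀ A : C, A ⊗ A ⟶ A)
    (η_natural : ∀ {A B : C} (f : A ⟶ B), η A ≫ f = η B)
    (μ_natural : ∀ {A B : C} (f : A ⟶ B), (f ⊗ₘ f) ≫ μ B = μ A ≫ f)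
    (unit_left : ∀ A : C, (η A ⊗ₘ 𝟙 A) ≫ μ A = (λ_ A).hom)
    (unit_right : ∀ A : C, (𝟙 A ⊗ₘ η A) ≫ μ A = (ρ_ A).hom)
    (μ_tensor : ∀ A B : C, μ (A ⊗ B) = tensorμ A B A B ≫ (μ A ⊗ₘ μ B))
    (η_tensor : ∀ A B : C, η (A ⊗ B) = (λ_ (𝟙_ C)).inv ≫ (η A ⊗ₘ η B))
    (η_unit : η (𝟙_ C) = 𝟙 (𝟙_ C))
    (μ_unit : μ (𝟙_ C) = (λ_ (𝟙_ C)).hom)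
    (η'_natural : ∀ {A B : C} (f : A ⟶ B), η' A ≫ f = η' B)
    (μ'_natural : ∀ {A B : C} (f : A ⟶ B), (f ⊗ₘ f) ≫ μ' B = μ' A ≫ f)
    (unit'_left : ∀ A : C, (η' A ⊗ₘ 𝟙 A) ≫ μ' A = (λ_ A).hom)
    (unit'_right : ∀ A : C, (𝟙 A ⊗ₘ η' A) ≫ μ' A = (ρ_ A).hom)
    (μ'_tensor : ∀ A B : C, μ' (A ⊗ B) = tensorμ A B A B ≫ (μ' A ⊗ₘ μ' B))
    (η'_tensor : ∀ A B : C, η' (A ⊗ B) = (λ_ (𝟙_ C)).inv ≫ (η' A ⊗ₘ η' B))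
    (η'_unit : η' (𝟙_ C) = 𝟙 (𝟙_ C))
    (μ'_unit : μ' (𝟙_ C) = (λ_ (𝟙_ C)).hom) :
    ∀ A : C, η A = η' A ∧ μ A = μ' A :=
  central_monoid_unique_general η μ η' μ' unit_left unit_right η'_natural μ'_natural unit'_left
    unit'_right μ'_tensor η'_unit
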